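/- Let P be the set of nine points of concurrence (one for each of the nine distinguished submodules, namely the common duad of the three synthemes whose union is the submodule's trace D(x,y)) and let Λ be the set of six synthemes whose β-image is contained in three of the nine submodules. Then the nine points of P are pairwise distinct, each syntheme in Λ contains exactly 3 points of P, each point of P lies in exactly 2 synthemes of Λ, and any two distinct synthemes of Λ share at most one point of P; thus (P, Λ) is a 3×3 grid, a generalized quadrangle of type GQ(2,1), inside the doily. -/

import Mathlib

open Matrix

/-- The matrix m(a,b,c,d) = [[a,c,d],[0,b,0],[0,0,b]] over GF(2). -/
def m (a b c d : ZMod 2) : Matrix (Fin 3) (Fin 3) (ZMod 2) :=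
  !![a, c, d; 0, b, 0; 0, 0, b]

lemma m_mul (a b c d a' b' c' d' : ZMod 2) :
    m a b c d * m a' b' c' d' =
      m (a * a') (b * b') (a * c' + c * b') (a * d' + d * b') := by
  ext i j
  fin_cases i <;> fin_cases j <;>
    simp [m, Matrix.mul_apply, Fin.sum_univ_three, Matrix.vecHead, Matrix.vecTail]

/-- The ring R, as a subring of the 3×3 matrices over GF(2). -/
def Rring : Subring (Matrix (Fin 3) (Fin 3) (ZMod 2)) where
  carrier := {A | ∃ a b c d : ZMod 2, A = m a b c d}
  zero_mem' := ⟨0, 0, 0, 0, by ext i j; fin_cases i <;> fin_cases j <;> simp [m, Matrix.vecHead, Matrix.vecTail]⟩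
  one_mem' := ⟨1, 1, 0, 0, by ext i j; fin_cases i <;> fin_cases j <;> simp [m, Matrix.one_apply, Matrix.vecHead, Matrix.vecTail]⟩
  add_mem' := by
    rintro A B ⟨a, b, c, d, rfl⟩ ⟨a', b', c', d', rfl⟩
    exact ⟨a + a', b + b', c + c', d + d',
      by ext i j; fin_cases i <;> fin_cases j <;> simp [m, Matrix.vecHead, Matrix.vecTail]⟩
  neg_mem' := by
    rintro A ⟨a, b, c, d, rfl⟩
    exact ⟨-a, -b, -c, -d,
      by ext i j; fin_cases i <;> fin_cases j <;> simp [m, Matrix.vecHead, Matrix.vecTail]⟩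
  mul_mem' := by
    rintro A B ⟨a, b, c, d, rfl⟩ ⟨a', b', c', d', rfl⟩
    exact ⟨a * a', b * b', a * c' + c * b', a * d' + d * b', m_mul a b c d a' b' c' d'⟩

lemma m_mem (a b c d : ZMod 2) : m a b c d ∈ Rring := ⟨a, b, c, d, rfl⟩

/-- The element m(a,b,c,d) viewed as an element of the ring R. -/
def mm (a b c d : ZMod 2) : Rring := ⟨m a b c d, m_mem a b c d⟩

/-- The cyclic left submodule R(x,y) = {(αx, αy) : α ∈ R} of R², as a set of vectors. -/
def RM (x y : Rring) : Set (Rring × Rring) := {p | ∃ α : Rring, p = (α * x, α * y)}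

def t : Rring := mm 0 0 1 0
def f : Rring := mm 0 0 1 1
def s : Rring := mm 0 0 0 1
def e : Rring := mm 0 1 0 0
def u : Rring := mm 0 1 1 0
def v : Rring := mm 0 1 1 1
def w : Rring := mm 0 1 0 1

/-- The nine distinguished generators. -/
def gens : List (Rring × Rring) :=
  [(t, e), (f, e), (s, e), (e, u), (e, v), (e, w), (e, s), (e, f), (e, t)]

/-- A duad: a 2-element subset of the 6-element set. -/
def IsDuad (p : Finset (Fin 6)) : Prop := p.card = 2

/-- A syntheme: a set of three duads partitioning the 6-element set. -/
def IsSyntheme (L : Finset (Finset (Fin 6))) : Prop :=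
  L.card = 3 ∧ (∀ p ∈ L, IsDuad p) ∧ ∀ i : Fin 6, ∃! p, p ∈ L ∧ i ∈ p

/-- The bijection β from the 15 duads (2-subsets of Fin 6, with 0,…,5 standing for
1,…,6) to the 15 nonzero vectors of J × J. -/
def β (p : Finset (Fin 6)) : Rring × Rring :=
  if p = {0, 1} then (t, t)
  else if p = {0, 2} then (f, t)
  else if p = {0, 3} then (0, s)
  else if p = {0, 4} then (t, s)
  else if p = {0, 5} then (f, 0)
  else if p = {1, 2} then (s, 0)
  else if p = {1, 3} then (t, f)
  else if p = {1, 4} then (0, f)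
  else if p = {1, 5} then (s, t)
  else if p = {2, 3} then (f, f)
  else if p = {2, 4} then (s, f)
  else if p = {2, 5} then (0, t)
  else if p = {3, 4} then (t, 0)
  else if p = {3, 5} then (f, s)
  else if p = {4, 5} then (s, s)
  else 0

/-- D(x,y): the set of duads whose β-image lies in the submodule R(x,y). -/
def Dset (x y : Rring) : Set (Finset (Fin 6)) := {p | IsDuad p ∧ β p ∈ RM x y}

/-- The number of the nine distinguished submodules containing the β-image of the
syntheme L. -/
noncomputable def Ncount (L : Finset (Finset (Fin 6))) : ℕ :=
  {M : Set (Rring × Rring) | (∃ g ∈ gens, M = RM g.1 g.2) ∧ ∀ q ∈ L, β q ∈ M}.ncard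

/-- `p` is the point of concurrence of the submodule R(x,y) generated by `g = (x,y)`:
the trace D(x,y) is the union of three distinct synthemes pairwise meeting in {p}. -/
def IsConc (g : Rring × Rring) (p : Finset (Fin 6)) : Prop :=
  IsDuad p ∧ ∃ L1 L2 L3 : Finset (Finset (Fin 6)),
    IsSyntheme L1 ∧ IsSyntheme L2 ∧ IsSyntheme L3 ∧
    L1 ≠ L2 ∧ L1 ≠ L3 ∧ L2 ≠ L3 ∧
    Dset g.1 g.2 = ↑L1 ∪ ↑L2 ∪ ↑L3 ∧
    (↑L1 ∩ ↑L2 : Set (Finset (Fin 6))) = {p} ∧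
    (↑L1 ∩ ↑L3 : Set (Finset (Fin 6))) = {p} ∧
    (↑L2 ∩ ↑L3 : Set (Finset (Fin 6))) = {p}

/-- P: the set of the points of concurrence of the nine distinguished submodules. -/
def Pset : Set (Finset (Fin 6)) := {p | ∃ g ∈ gens, IsConc g p}

/-- Λ: the set of synthemes whose β-image is contained in three of the nine
distinguished submodules. -/
def Lams : Set (Finset (Finset (Fin 6))) := {L | IsSyntheme L ∧ Ncount L = 3}

/-!
Under β, the trace D(x,y) of each of the nine distinguished submodules turns out to be
p^⊥ for a duad p, that is, p together with the six duads disjoint from it (in the doily two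
duads are collinear iff they are disjoint). Now p^⊥ is the union of the three synthemes
through p, and two distinct synthemes share at most one duad, because two distinct duads
have only three duads in their common perp. Hence p is the point of concurrence, and a
syntheme lies in the submodule iff it passes through p. So the number of distinguished
submodules containing a syntheme L is |P ∩ L|, and Λ consists of the synthemes made of
points of P; the remaining counts are a finite check.
-/

open Finset

instance : DecidablePred IsDuad := fun p => inferInstanceAs (Decidable (#p = 2))

def duads : Finset (Finset (Fin 6)) := univ.powersetCard 2

lemma mem_duads {p : Finset (Fin 6)} : p ∈ duads ↔ IsDuad p := mem_powersetCard_univ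

def perp (p : Finset (Fin 6)) : Finset (Finset (Fin 6)) :=
  duads.filter fun q => q = p ∨ Disjoint p q

lemma mem_perp {p q : Finset (Fin 6)} : q ∈ perp p ↔ IsDuad q ∧ (q = p ∨ Disjoint p q) := by
  rw [perp, mem_filter, mem_duads]

lemma card_perp_inter_perp_le :
    ∀ p ∈ duads, ∀ q ∈ duads, p ≠ q → #(perp p ∩ perp q) ≤ 3 := by
  decide

/-- The synthemes made of duads of `D`, recognised by covering `Fin 6`. -/
def synthemesIn (D : Finset (Finset (Fin 6))) : Finset (Finset (Finset (Fin 6))) :=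
  (D.powersetCard 3).filter fun L => L.sup id = univ

section Syntheme

variable {L L' : Finset (Finset (Fin 6))} {p q : Finset (Fin 6)}

lemma IsSyntheme.eq_of_mem_of_mem (hL : IsSyntheme L) (hp : p ∈ L) (hq : q ∈ L) {i : Fin 6}
    (hip : i ∈ p) (hiq : i ∈ q) : p = q :=
  (hL.2.2 i).unique ⟨hp, hip⟩ ⟨hq, hiq⟩

lemma isSyntheme_iff_sup_eq_univ (hL : ∀ p ∈ L, IsDuad p) (h3 : #L = 3) :
    IsSyntheme L ↔ L.sup id = univ := by
  refine ⟨fun h => eq_univ_of_forall fun i => ?_, fun h => ⟨h3, hL, fun i => ?_⟩⟩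
  · obtain ⟨p, ⟨hp, hip⟩, -⟩ := h.2.2 i
    exact mem_sup.2 ⟨p, hp, hip⟩
  obtain ⟨p, hp, hip⟩ := mem_sup.1 (h ▸ mem_univ i)
  refine ⟨p, ⟨hp, hip⟩, fun q ⟨hq, hiq⟩ => by_contra fun hqp => ?_⟩
  -- two duads sharing `i` cover at most three points, the third duad only two more
  set r := (L.erase p).erase q
  have hr : #r = 1 := by
    rw [card_erase_of_mem (mem_erase.2 ⟨hqp, hq⟩), card_erase_of_mem hp, h3]
  obtain ⟨x, hx⟩ := card_eq_one.1 hr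
  have hxL : x ∈ L := mem_of_mem_erase (mem_of_mem_erase (hx ▸ mem_singleton_self x))
  have hLeq : L = insert p (insert q r) := by
    rw [insert_erase (mem_erase.2 ⟨hqp, hq⟩), insert_erase hp]
  have hcover : L.sup id = p ∪ q ∪ x := by
    rw [hLeq, hx]; simp [union_assoc]
  have hpq : #(p ∪ q) + #(p ∩ q) = 4 := by
    rw [card_union_add_card_inter, hL p hp, hL q hq]
  have hinter : 0 < #(p ∩ q) := card_pos.2 ⟨i, mem_inter.2 ⟨hip, hiq⟩⟩
  have := card_union_le (p ∪ q) x
  rw [← hcover, h, card_univ, Fintype.card_fin, hL x hxL] at this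
  omega

lemma mem_synthemesIn {D : Finset (Finset (Fin 6))} (hD : D ⊆ duads) :
    L ∈ synthemesIn D ↔ IsSyntheme L ∧ L ⊆ D := by
  rw [synthemesIn, mem_filter, mem_powersetCard]
  constructor
  · rintro ⟨⟨hLD, h3⟩, hsup⟩
    exact ⟨(isSyntheme_iff_sup_eq_univ (fun p hp => mem_duads.1 (hD (hLD hp))) h3).2 hsup, hLD⟩
  · rintro ⟨hL, hLD⟩
    exact ⟨⟨hLD, hL.1⟩, (isSyntheme_iff_sup_eq_univ hL.2.1 hL.1).1 hL⟩

lemma IsSyntheme.subset_perp_iff (hL : IsSyntheme L) (hp : IsDuad p) : L ⊆ perp p ↔ p ∈ L := by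
  obtain ⟨i, hip⟩ : p.Nonempty := card_pos.1 (by rw [hp]; norm_num)
  refine ⟨fun h => by_contra fun hpL => ?_, fun hpL q hq => mem_perp.2 ⟨hL.2.1 q hq, ?_⟩⟩
  · obtain ⟨q, ⟨hq, hiq⟩, -⟩ := hL.2.2 i
    rcases (mem_perp.1 (h hq)).2 with rfl | hdisj
    · exact hpL hq
    · exact disjoint_left.1 hdisj hip hiq
  · refine or_iff_not_imp_left.2 fun hqp => disjoint_left.2 fun j hjp hjq => hqp ?_
    exact hL.eq_of_mem_of_mem hq hpL hjq hjp

lemma IsSyntheme.eq_of_mem_of_mem_of_ne (hL : IsSyntheme L) (hL' : IsSyntheme L') (hpq : p ≠ q)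
    (hp : p ∈ L) (hq : q ∈ L) (hp' : p ∈ L') (hq' : q ∈ L') : L = L' := by
  have hpd := hL.2.1 p hp
  have hqd := hL.2.1 q hq
  have key : ∀ {M}, IsSyntheme M → p ∈ M → q ∈ M → M = perp p ∩ perp q := fun hM hpM hqM =>
    eq_of_subset_of_card_le
      (subset_inter ((hM.subset_perp_iff hpd).2 hpM) ((hM.subset_perp_iff hqd).2 hqM))
      (hM.1 ▸ card_perp_inter_perp_le p (mem_duads.2 hpd) q (mem_duads.2 hqd) hpq)
  rw [key hL hp hq, key hL' hp' hq']

lemma IsSyntheme.subsingleton_inter (hL : IsSyntheme L) (hL' : IsSyntheme L') (hne : L ≠ L') :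
    (↑L ∩ ↑L' : Set (Finset (Fin 6))).Subsingleton := fun _ ⟨ha, ha'⟩ _ ⟨hb, hb'⟩ =>
  by_contra fun hab => hne (hL.eq_of_mem_of_mem_of_ne hL' hab ha hb ha' hb')

lemma IsSyntheme.inter_eq_singleton (hL : IsSyntheme L) (hL' : IsSyntheme L') (hne : L ≠ L')
    (hp : p ∈ L) (hp' : p ∈ L') : (↑L ∩ ↑L' : Set (Finset (Fin 6))) = {p} :=
  (hL.subsingleton_inter hL' hne).eq_singleton_of_mem ⟨hp, hp'⟩

end Syntheme

lemma exists_synthemes_perp_eq {p : Finset (Fin 6)} (hp : IsDuad p) :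
    ∃ L₁ L₂ L₃, IsSyntheme L₁ ∧ IsSyntheme L₂ ∧ IsSyntheme L₃ ∧ L₁ ≠ L₂ ∧ L₁ ≠ L₃ ∧ L₂ ≠ L₃ ∧
      perp p = L₁ ∪ L₂ ∪ L₃ := by
  have h : ∀ p ∈ duads, #(synthemesIn (perp p)) = 3 ∧ (synthemesIn (perp p)).sup id = perp p := by
    decide
  obtain ⟨hcard, hsup⟩ := h p (mem_duads.2 hp)
  obtain ⟨L₁, L₂, L₃, h₁₂, h₁₃, h₂₃, hS⟩ := card_eq_three.1 hcard
  have hsyn : ∀ L ∈ synthemesIn (perp p), IsSyntheme L := fun L hL =>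
    ((mem_synthemesIn (filter_subset _ _)).1 hL).1
  refine ⟨L₁, L₂, L₃, hsyn _ (by simp [hS]), hsyn _ (by simp [hS]), hsyn _ (by simp [hS]),
    h₁₂, h₁₃, h₂₃, ?_⟩
  rw [← hsup, hS]
  simp [union_assoc]

lemma perp_injOn : Set.InjOn perp {p | IsDuad p} := fun p hp q hq hpq => by
  obtain ⟨L₁, L₂, L₃, h₁, h₂, -, h₁₂, -, -, hU⟩ := exists_synthemes_perp_eq hp
  have hsub₁ : L₁ ⊆ perp p := hU ▸ subset_union_left.trans subset_union_left
  have hsub₂ : L₂ ⊆ perp p := hU ▸ subset_union_right.trans subset_union_left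
  by_contra hne
  refine h₁₂ (h₁.eq_of_mem_of_mem_of_ne h₂ hne ?_ ?_ ?_ ?_)
  · exact (h₁.subset_perp_iff hp).1 hsub₁
  · exact (h₁.subset_perp_iff hq).1 (hpq ▸ hsub₁)
  · exact (h₂.subset_perp_iff hp).1 hsub₂
  · exact (h₂.subset_perp_iff hq).1 (hpq ▸ hsub₂)

lemma isConc_iff_of_Dset_eq_perp {g : Rring × Rring} {p₀ : Finset (Fin 6)} (hp₀ : IsDuad p₀)
    (hD : Dset g.1 g.2 = ↑(perp p₀)) (p : Finset (Fin 6)) : IsConc g p ↔ p = p₀ := by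
  have through : ∀ {L}, IsSyntheme L → ↑L ⊆ Dset g.1 g.2 → p₀ ∈ L := fun hL hLD =>
    (hL.subset_perp_iff hp₀).1 (coe_subset.1 (hD ▸ hLD))
  constructor
  · rintro ⟨-, L₁, L₂, L₃, h₁, h₂, -, h₁₂, -, -, hU, hI, -, -⟩
    have hp : p ∈ (↑L₁ ∩ ↑L₂ : Set _) := hI ▸ rfl
    refine h₁.subsingleton_inter h₂ h₁₂ hp ⟨through h₁ ?_, through h₂ ?_⟩ <;> rw [hU]
    · exact Set.subset_union_left.trans Set.subset_union_left
    · exact Set.subset_union_right.trans Set.subset_union_left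
  · rintro rfl
    obtain ⟨L₁, L₂, L₃, h₁, h₂, h₃, h₁₂, h₁₃, h₂₃, hU⟩ := exists_synthemes_perp_eq hp₀
    have hD' : Dset g.1 g.2 = ↑L₁ ∪ ↑L₂ ∪ ↑L₃ := by rw [hD, hU, coe_union, coe_union]
    have hm₁ := through h₁ (hD' ▸ Set.subset_union_left.trans Set.subset_union_left)
    have hm₂ := through h₂ (hD' ▸ Set.subset_union_right.trans Set.subset_union_left)
    have hm₃ := through h₃ (hD' ▸ Set.subset_union_right)
    exact ⟨hp₀, L₁, L₂, L₃, h₁, h₂, h₃, h₁₂, h₁₃, h₂₃, hD', h₁.inter_eq_singleton h₂ h₁₂ hm₁ hm₂,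
      h₁.inter_eq_singleton h₃ h₁₃ hm₁ hm₃, h₂.inter_eq_singleton h₃ h₂₃ hm₂ hm₃⟩

lemma exists_eq_mm (α : Rring) : ∃ a b c d, α = mm a b c d := by
  obtain ⟨A, a, b, c, d, rfl⟩ := α
  exact ⟨a, b, c, d, rfl⟩

lemma mem_RM_iff {x y : Rring} {z : Rring × Rring} :
    z ∈ RM x y ↔ ∃ a b c d : ZMod 2, z = (mm a b c d * x, mm a b c d * y) := by
  refine ⟨fun ⟨α, h⟩ => ?_, fun ⟨a, b, c, d, h⟩ => ⟨_, h⟩⟩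
  obtain ⟨a, b, c, d, rfl⟩ := exists_eq_mm α
  exact ⟨a, b, c, d, h⟩

instance (x y : Rring) : DecidablePred (· ∈ RM x y) := fun _ =>
  decidable_of_iff _ mem_RM_iff.symm

def Dfin (x y : Rring) : Finset (Finset (Fin 6)) := duads.filter fun q => β q ∈ RM x y

lemma coe_Dfin (x y : Rring) : (Dfin x y : Set (Finset (Fin 6))) = Dset x y := by
  ext q
  simp [Dfin, Dset, mem_duads]

/-- The points of concurrence, in the order of `gens`; in the paper's labelling
36, 25, 14, 12, 34, 56, 23, 16, 45. -/
def concPoints : List (Finset (Fin 6)) :=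
  [{2, 5}, {1, 4}, {0, 3}, {0, 1}, {2, 3}, {4, 5}, {1, 2}, {0, 5}, {3, 4}]

lemma concPoints_isDuad : ∀ p ∈ concPoints, IsDuad p := by
  decide

lemma map_Dfin_gens : gens.map (fun g => Dfin g.1 g.2) = concPoints.map perp := by
  decide

lemma Dset_injOn_gens : Set.InjOn (fun g : Rring × Rring => Dset g.1 g.2) {g | g ∈ gens} := by
  have hnodup : (gens.map fun g => Dfin g.1 g.2).Nodup := by
    rw [map_Dfin_gens]
    decide
  intro g hg g' hg' h
  refine List.inj_on_of_nodup_map hnodup hg hg' (coe_injective ?_)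
  simpa only [coe_Dfin] using h

lemma exists_Dset_eq_perp_of_mem_gens {g : Rring × Rring} (hg : g ∈ gens) :
    ∃ p ∈ concPoints, Dset g.1 g.2 = ↑(perp p) := by
  obtain ⟨p, hp, h⟩ := List.mem_map.1 (map_Dfin_gens ▸ List.mem_map_of_mem hg)
  exact ⟨p, hp, by rw [← coe_Dfin, h]⟩

lemma exists_Dset_eq_perp_of_mem_concPoints {p : Finset (Fin 6)} (hp : p ∈ concPoints) :
    ∃ g ∈ gens, Dset g.1 g.2 = ↑(perp p) := by
  obtain ⟨g, hg, h⟩ := List.mem_map.1 (map_Dfin_gens.symm ▸ List.mem_map_of_mem hp)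
  exact ⟨g, hg, by rw [← coe_Dfin, h]⟩

lemma exists_concPoint_isConc_iff {g : Rring × Rring} (hg : g ∈ gens) :
    ∃ p₀ ∈ concPoints, Dset g.1 g.2 = ↑(perp p₀) ∧ ∀ p, IsConc g p ↔ p = p₀ := by
  obtain ⟨p₀, hp₀, hD⟩ := exists_Dset_eq_perp_of_mem_gens hg
  exact ⟨p₀, hp₀, hD, isConc_iff_of_Dset_eq_perp (concPoints_isDuad p₀ hp₀) hD⟩

lemma mem_Pset {p : Finset (Fin 6)} : p ∈ Pset ↔ p ∈ concPoints := by
  refine ⟨fun ⟨g, hg, hp⟩ => ?_, fun hp => ?_⟩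
  · obtain ⟨p₀, hp₀, -, hconc⟩ := exists_concPoint_isConc_iff hg
    exact (hconc p).1 hp ▸ hp₀
  · obtain ⟨g, hg, hD⟩ := exists_Dset_eq_perp_of_mem_concPoints hp
    exact ⟨g, hg, (isConc_iff_of_Dset_eq_perp (concPoints_isDuad p hp) hD p).2 rfl⟩

lemma Pset_eq : Pset = ↑concPoints.toFinset := by
  ext p
  rw [mem_coe, List.mem_toFinset, mem_Pset]

/-- The duads whose β-image lies in `M`, so that `Dset x y = duadTrace (RM x y)`. -/
def duadTrace (M : Set (Rring × Rring)) : Set (Finset (Fin 6)) := {q | IsDuad q ∧ β q ∈ M}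

lemma IsSyntheme.forall_β_mem_RM_iff {L : Finset (Finset (Fin 6))} (hL : IsSyntheme L)
    {x y : Rring} {p₀ : Finset (Fin 6)} (hp₀ : IsDuad p₀) (hD : Dset x y = ↑(perp p₀)) :
    (∀ q ∈ L, β q ∈ RM x y) ↔ p₀ ∈ L := by
  rw [← hL.subset_perp_iff hp₀, ← coe_subset, ← hD]
  exact ⟨fun h q hq => ⟨hL.2.1 q hq, h q hq⟩, fun h q hq => (h hq).2⟩

lemma Ncount_eq_ncard_Pset_inter {L : Finset (Finset (Fin 6))} (hL : IsSyntheme L) :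
    Ncount L = (Pset ∩ ↑L).ncard := by
  set S := {M : Set (Rring × Rring) | (∃ g ∈ gens, M = RM g.1 g.2) ∧ ∀ q ∈ L, β q ∈ M}
  have hinj : Set.InjOn duadTrace S := by
    rintro _ ⟨⟨g, hg, rfl⟩, -⟩ _ ⟨⟨g', hg', rfl⟩, -⟩ h
    rw [Dset_injOn_gens hg hg' h]
  have himage : duadTrace '' S = (fun p => (perp p : Set (Finset (Fin 6)))) '' (Pset ∩ ↑L) := by
    ext X
    constructor
    · rintro ⟨_, ⟨⟨g, hg, rfl⟩, hβ⟩, rfl⟩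
      obtain ⟨p₀, hp₀, hD, hconc⟩ := exists_concPoint_isConc_iff hg
      exact ⟨p₀, ⟨⟨g, hg, (hconc p₀).2 rfl⟩,
        (hL.forall_β_mem_RM_iff (concPoints_isDuad p₀ hp₀) hD).1 hβ⟩, hD.symm⟩
    · rintro ⟨p, ⟨hP, hpL⟩, rfl⟩
      have hp := mem_Pset.1 hP
      obtain ⟨g, hg, hD⟩ := exists_Dset_eq_perp_of_mem_concPoints hp
      exact ⟨RM g.1 g.2, ⟨⟨g, hg, rfl⟩,
        (hL.forall_β_mem_RM_iff (concPoints_isDuad p hp) hD).2 hpL⟩, hD⟩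
  have hperp : Set.InjOn (fun p => (perp p : Set (Finset (Fin 6)))) (Pset ∩ ↑L) :=
    fun p hp q hq h => perp_injOn (concPoints_isDuad p (mem_Pset.1 hp.1))
      (concPoints_isDuad q (mem_Pset.1 hq.1)) (coe_injective h)
  rw [Ncount, ← hinj.ncard_image, himage, hperp.ncard_image]

lemma Lams_eq : Lams = ↑(synthemesIn concPoints.toFinset) := by
  ext L
  have hP : concPoints.toFinset ⊆ duads := fun p hp =>
    mem_duads.2 (concPoints_isDuad p (List.mem_toFinset.1 hp))
  rw [mem_coe, mem_synthemesIn hP]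
  refine and_congr_right fun hL => ?_
  rw [Ncount_eq_ncard_Pset_inter hL, Pset_eq, ← coe_inter, Set.ncard_coe_finset]
  refine ⟨fun h => ?_, fun h => by rw [inter_eq_right.2 h, hL.1]⟩
  exact eq_of_subset_of_card_le inter_subset_right (by rw [hL.1, h]) ▸ inter_subset_left

lemma card_synthemesIn_concPoints : #(synthemesIn concPoints.toFinset) = 6 := by
  decide

lemma card_filter_mem_synthemesIn_concPoints :
    ∀ p ∈ concPoints, #((synthemesIn concPoints.toFinset).filter (p ∈ ·)) = 2 := by
  decide

/-- Each distinguished submodule has a unique point of concurrence, distinct generators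
have distinct points of concurrence (so P has exactly 9 points), Λ has exactly 6
synthemes, each syntheme of Λ contains exactly 3 points of P, each point of P lies in
exactly 2 synthemes of Λ, and two distinct synthemes of Λ share at most one point of P:
(P, Λ) is a 3×3 grid, a generalized quadrangle GQ(2,1), inside the doily. -/
theorem grid_GQ_2_1_inside_doily :
    (∀ g ∈ gens, ∃! p, IsConc g p) ∧
    (∀ g ∈ gens, ∀ g' ∈ gens, ∀ p, IsConc g p → IsConc g' p → g = g') ∧
    Pset.ncard = 9 ∧ Lams.ncard = 6 ∧
    (∀ L ∈ Lams, (Pset ∩ ↑L).ncard = 3) ∧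
    (∀ p ∈ Pset, {L ∈ Lams | p ∈ L}.ncard = 2) ∧
    (∀ L ∈ Lams, ∀ L' ∈ Lams, L ≠ L' → (Pset ∩ ↑L ∩ ↑L').Subsingleton) := by
  refine ⟨fun g hg => ?_, fun g hg g' hg' p h h' => ?_, ?_, ?_, fun L hL => ?_, fun p hp => ?_,
    fun L hL L' hL' hne => ?_⟩
  · obtain ⟨p₀, -, -, hconc⟩ := exists_concPoint_isConc_iff hg
    exact ⟨p₀, (hconc p₀).2 rfl, fun p hp => (hconc p).1 hp⟩
  · obtain ⟨p₀, -, hD, hconc⟩ := exists_concPoint_isConc_iff hg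
    obtain ⟨p₀', -, hD', hconc'⟩ := exists_concPoint_isConc_iff hg'
    refine Dset_injOn_gens hg hg' ?_
    simp only [hD, hD', ← (hconc p).1 h, ← (hconc' p).1 h']
  · rw [Pset_eq, Set.ncard_coe_finset]
    decide
  · rw [Lams_eq, Set.ncard_coe_finset, card_synthemesIn_concPoints]
  · rw [← Ncount_eq_ncard_Pset_inter hL.1]
    exact hL.2
  · have hfilter : {L ∈ Lams | p ∈ L} = ↑((synthemesIn concPoints.toFinset).filter (p ∈ ·)) := by
      ext L
      simp [Lams_eq]
    rw [hfilter, Set.ncard_coe_finset]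
    exact card_filter_mem_synthemesIn_concPoints p (mem_Pset.1 hp)
  · exact (hL.1.subsingleton_inter hL'.1 hne).anti fun _ hx => ⟨hx.1.2, hx.2⟩
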